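/- Let G be a locally graded non-sofic group. Then G contains a finitely generated non-sofic subgroup H together with a strictly decreasing sequence H = N_0 > N_1 > N_2 > ⋯ of finitely generated normal subgroups of H such that: each N_i is non-sofic; the intersection R of all the N_i is nontrivial and is contained in the profinite residual of H; and H/R is residually finite. -/

import Mathlib

/-- The normalized Hamming distance between two permutations of `Fin n`:
the number of points where they differ, divided by `n`. -/
noncomputable def permHammingDist {n : ℕ} (σ τ : Equiv.Perm (Fin n)) : ℝ :=
  ((Finset.univ.filter fun i => σ i ≠ τ i).card : ℝ) / n

/-- A group `G` is sofic if for every finite subset `F ⊆ G` and every `ε > 0` there exist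
`n ≥ 1` and a map `θ` from `F` to `Sym(Fin n)` (extended to all of `G`) such that:
(i) `θ` is an `ε`-approximate homomorphism on `F`;
(ii) `θ` almost sends the identity to the identity;
(iii) distinct elements of `F` are sent to permutations at Hamming distance at least `1/4`. -/
def IsSofic (G : Type*) [Group G] : Prop :=
  ∀ (F : Finset G) (ε : ℝ), 0 < ε →
    ∃ n : ℕ, 1 ≤ n ∧ ∃ θ : G → Equiv.Perm (Fin n),
      (∀ g h : G, g ∈ F → h ∈ F → g * h ∈ F →
        permHammingDist (θ g * θ h) (θ (g * h)) < ε) ∧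
      ((1 : G) ∈ F → permHammingDist (θ 1) 1 < ε) ∧
      (∀ x y : G, x ∈ F → y ∈ F → x ≠ y → 1 / 4 ≤ permHammingDist (θ x) (θ y))

/-- A group is minimal non-sofic if it is not sofic but every proper subgroup is sofic. -/
def IsMinimalNonSofic (G : Type*) [Group G] : Prop :=
  ¬ IsSofic G ∧ ∀ H : Subgroup G, H ≠ ⊤ → IsSofic H

/-- A group is locally graded if every nontrivial finitely generated subgroup has a
proper subgroup of finite index. -/
def IsLocallyGraded (G : Type*) [Group G] : Prop :=
  ∀ H : Subgroup G, H ≠ ⊥ → H.FG → ∃ K : Subgroup H, K ≠ ⊤ ∧ K.FiniteIndex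

/-!
Soficity is a local property, so `G` has a finitely generated non-sofic subgroup `H`.
Residually finite groups are sofic (a finite quotient in which a finite set `F` stays injective
acts freely on itself), so `H` is not residually finite. A group is sofic as soon as a
finite-index subgroup `K` is: an approximation `θ` of `K` induces one of `H` on `H ⧸ K × Y`,
and on every block `{q} × Y` the images of distinct elements either move `q` to different
cosets or differ through their cocycles, so the separation `1/4` survives. Hence every
finite-index subgroup of `H` is non-sofic, in particular nontrivial, and local gradedness puts a
smaller finite-index normal subgroup inside each of them. Since `H` has only countably many
finite-index normal subgroups `M j`, the chain `N (j + 1) = N' ⊓ M j` with `N' < N j` is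
strictly decreasing and cofinal; its intersection is the profinite residual, which is
nontrivial because `H` is not residually finite.
-/

universe u

open Equiv Function

section PermDist

variable {X : Type*} [Fintype X] [DecidableEq X]

noncomputable def permDist (σ τ : Perm X) : ℝ :=
  hammingDist ⇑σ ⇑τ / Fintype.card X

theorem permHammingDist_eq_permDist {n : ℕ} (σ τ : Perm (Fin n)) :
    permHammingDist σ τ = permDist σ τ := by
  rw [permHammingDist, permDist, Fintype.card_fin]
  rfl

theorem hammingDist_comp_equiv {ι ι' β : Type*} [Fintype ι] [Fintype ι'] [DecidableEq β]
    (e : ι' ≃ ι) (x y : ι → β) : hammingDist (x ∘ e) (y ∘ e) = hammingDist x y :=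
  Finset.card_equiv e (by simp)

theorem hammingDist_eq_card_of_forall_ne {ι β : Type*} [Fintype ι] [DecidableEq β]
    {x y : ι → β} (h : ∀ i, x i ≠ y i) : hammingDist x y = Fintype.card ι := by
  rw [hammingDist, Finset.filter_true_of_mem fun i _ => h i, Finset.card_univ]

theorem permDist_permCongr {Y : Type*} [Fintype Y] [DecidableEq Y] (e : X ≃ Y) (σ τ : Perm X) :
    permDist (e.permCongr σ) (e.permCongr τ) = permDist σ τ := by
  have : hammingDist ⇑(e.permCongr σ) ⇑(e.permCongr τ) = hammingDist ⇑σ ⇑τ := by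
    rw [← hammingDist_comp_equiv e.symm σ τ,
      ← hammingDist_comp (fun _ => e) (x := σ ∘ e.symm) fun _ => e.injective]
    rfl
  rw [permDist, permDist, this, Fintype.card_congr e]

variable [Nonempty X]

theorem permDist_lt_iff {σ τ : Perm X} {ε : ℝ} :
    permDist σ τ < ε ↔ (hammingDist ⇑σ ⇑τ : ℝ) < ε * Fintype.card X :=
  div_lt_iff₀ (by exact_mod_cast Fintype.card_pos)

theorem le_permDist_iff {σ τ : Perm X} {c : ℝ} :
    c ≤ permDist σ τ ↔ c * Fintype.card X ≤ hammingDist ⇑σ ⇑τ :=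
  le_div_iff₀ (by exact_mod_cast Fintype.card_pos)

theorem permDist_eq_one_of_forall_ne {σ τ : Perm X} (h : ∀ x, σ x ≠ τ x) : permDist σ τ = 1 := by
  rw [permDist, hammingDist_eq_card_of_forall_ne h,
    div_self (by exact_mod_cast Fintype.card_ne_zero)]

end PermDist

section Product

variable {Q Y Z : Type*} [Fintype Y] [DecidableEq Z]

theorem hammingDist_prodMk [DecidableEq Q] (a b : Q) (u v : Y → Z) :
    hammingDist (fun y => (a, u y)) (fun y => (b, v y)) =
      if a = b then hammingDist u v else Fintype.card Y := by
  split_ifs with hab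
  · subst hab
    simp [hammingDist]
  · exact hammingDist_eq_card_of_forall_ne fun y h => hab (Prod.ext_iff.mp h).1

variable [Fintype Q]

theorem hammingDist_prod_eq_sum (x y : Q × Y → Z) :
    hammingDist x y = ∑ q, hammingDist (fun b => x (q, b)) (fun b => y (q, b)) := by
  simp only [hammingDist, Finset.card_filter]
  exact Fintype.sum_prod_type _

variable [DecidableEq Q] [DecidableEq Y] [Nonempty Q] [Nonempty Y]

theorem permDist_prod_lt {π ρ : Perm (Q × Y)} {ε : ℝ}
    (h : ∀ q, (hammingDist (fun y => π (q, y)) (fun y => ρ (q, y)) : ℝ) < ε * Fintype.card Y) :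
    permDist π ρ < ε := by
  rw [permDist_lt_iff, hammingDist_prod_eq_sum, Fintype.card_prod]
  push_cast
  calc _ < ∑ _ : Q, ε * (Fintype.card Y : ℝ) :=
        Finset.sum_lt_sum_of_nonempty Finset.univ_nonempty fun q _ => h q
    _ = _ := by simp [Finset.card_univ]; ring

theorem le_permDist_prod {π ρ : Perm (Q × Y)} {c : ℝ}
    (h : ∀ q, c * Fintype.card Y ≤ (hammingDist (fun y => π (q, y)) (fun y => ρ (q, y)) : ℝ)) :
    c ≤ permDist π ρ := by
  rw [le_permDist_iff, hammingDist_prod_eq_sum, Fintype.card_prod]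
  push_cast
  calc _ = ∑ _ : Q, c * (Fintype.card Y : ℝ) := by simp [Finset.card_univ]; ring
    _ ≤ _ := Finset.sum_le_sum fun q _ => h q

end Product

section SoficApprox

variable {G : Type*} [Group G]

/-- The three conditions of `IsSofic` for `F` and `ε`, with `Fin n` replaced by any finite type. -/
def IsSoficApprox {X : Type*} [Fintype X] [DecidableEq X] (F : Finset G) (ε : ℝ)
    (θ : G → Perm X) : Prop :=
  (∀ g h : G, g ∈ F → h ∈ F → g * h ∈ F → permDist (θ g * θ h) (θ (g * h)) < ε) ∧
    ((1 : G) ∈ F → permDist (θ 1) 1 < ε) ∧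
    (∀ x y : G, x ∈ F → y ∈ F → x ≠ y → 1 / 4 ≤ permDist (θ x) (θ y))

theorem isSofic_iff_isSoficApprox : IsSofic G ↔ ∀ (F : Finset G) (ε : ℝ), 0 < ε →
    ∃ n : ℕ, 1 ≤ n ∧ ∃ θ : G → Perm (Fin n), IsSoficApprox F ε θ := by
  simp only [IsSofic, IsSoficApprox, permHammingDist_eq_permDist]

theorem IsSoficApprox.permCongr {X Y : Type*} [Fintype X] [DecidableEq X] [Fintype Y]
    [DecidableEq Y] {F : Finset G} {ε : ℝ} {θ : G → Perm X} (hθ : IsSoficApprox F ε θ)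
    (e : X ≃ Y) : IsSoficApprox F ε fun g => e.permCongr (θ g) := by
  obtain ⟨hmul, hone, hsep⟩ := hθ
  refine ⟨fun g h hg hh hgh => ?_, fun h1 => ?_, fun x y hx hy hxy => ?_⟩
  · rw [← e.permCongr_mul, permDist_permCongr]
    exact hmul g h hg hh hgh
  · rw [show (1 : Perm Y) = e.permCongr 1 from e.permCongr_refl.symm, permDist_permCongr]
    exact hone h1
  · rw [permDist_permCongr]
    exact hsep x y hx hy hxy

theorem isSofic_of_forall_exists_isSoficApprox {G : Type u} [Group G]
    (h : ∀ (F : Finset G) (ε : ℝ), 0 < ε → ∃ (X : Type u) (_ : Fintype X) (_ : DecidableEq X)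
      (_ : Nonempty X) (θ : G → Perm X), IsSoficApprox F ε θ) :
    IsSofic G := by
  refine isSofic_iff_isSoficApprox.mpr fun F ε hε => ?_
  obtain ⟨X, _, _, _, θ, hθ⟩ := h F ε hε
  exact ⟨Fintype.card X, Fintype.card_pos, _, hθ.permCongr (Fintype.equivFin X)⟩

theorem IsSofic.of_forall_fg (h : ∀ H : Subgroup G, H.FG → IsSofic H) : IsSofic G := by
  classical
  intro F ε hε
  set H := Subgroup.closure (F : Set G)
  have hFH : ∀ g ∈ F, g ∈ H := fun g hg => Subgroup.subset_closure hg
  obtain ⟨n, hn, θ, hmul, hone, hsep⟩ := h H ⟨F, rfl⟩ (F.subtype (· ∈ H)) ε hε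
  let θ' : G → Perm (Fin n) := fun g => if hg : g ∈ H then θ ⟨g, hg⟩ else 1
  have hθ' : ∀ g (hg : g ∈ F), θ' g = θ ⟨g, hFH g hg⟩ := fun g hg => dif_pos _
  refine ⟨n, hn, θ', fun g h hg hh hgh => ?_, fun h1 => ?_, fun x y hx hy hxy => ?_⟩
  · rw [hθ' g hg, hθ' h hh, hθ' _ hgh]
    exact hmul _ _ (by simpa) (by simpa) (by simpa)
  · rw [hθ' 1 h1]
    exact hone (by simpa)
  · rw [hθ' x hx, hθ' y hy]
    exact hsep _ _ (by simpa) (by simpa) (by simpa using hxy)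

theorem isSoficApprox_of_forall_ne {X : Type*} [Fintype X] [DecidableEq X] [Nonempty X]
    {F : Finset G} {ε : ℝ} (hε : 0 < ε) (φ : G →* Perm X)
    (hφ : ∀ x y : G, x ∈ F → y ∈ F → x ≠ y → ∀ p, φ x p ≠ φ y p) :
    IsSoficApprox F ε φ := by
  refine ⟨fun g h _ _ _ => ?_, fun _ => ?_, fun x y hx hy hxy => ?_⟩
  · simpa [permDist, ← map_mul] using hε
  · simpa [permDist] using hε
  · rw [permDist_eq_one_of_forall_ne (hφ x y hx hy hxy)]
    norm_num

theorem Group.ResiduallyFinite.exists_injOn_quotient [Group.ResiduallyFinite G] (F : Finset G) :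
    ∃ N : Subgroup G, N.Normal ∧ N.FiniteIndex ∧ Set.InjOn (QuotientGroup.mk : G → G ⧸ N) F := by
  have hsep : ∀ p : F × F, ∃ K : FiniteIndexNormalSubgroup G,
      (p.1 : G) ≠ p.2 → (p.1 : G ⧸ K.toSubgroup) ≠ p.2 := fun p => by
    by_cases h : (p.1 : G) = p.2
    · exact ⟨.ofSubgroup ⊤, fun h' => (h' h).elim⟩
    · exact (Group.exists_finiteIndexNormalSubgroup_of_residuallyFinite _ _ h).imp fun _ hK _ => hK
  choose K hK using hsep
  refine ⟨⨅ p, (K p).toSubgroup, Subgroup.normal_iInf_normal fun _ => inferInstance,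
    Subgroup.finiteIndex_iInf fun _ => inferInstance, fun x hx y hy hxy => ?_⟩
  by_contra hne
  refine hK (⟨x, hx⟩, ⟨y, hy⟩) hne ?_
  rw [QuotientGroup.eq] at hxy ⊢
  exact Subgroup.mem_iInf.mp hxy _

theorem IsSofic.of_residuallyFinite [Group.ResiduallyFinite G] : IsSofic G := by
  classical
  refine isSofic_of_forall_exists_isSoficApprox fun F ε hε => ?_
  obtain ⟨N, _, _, hN⟩ := Group.ResiduallyFinite.exists_injOn_quotient F
  let := N.fintypeQuotientOfFiniteIndex
  refine ⟨G ⧸ N, inferInstance, inferInstance, inferInstance, _,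
    isSoficApprox_of_forall_ne hε ((MulAction.toPermHom (G ⧸ N) (G ⧸ N)).comp (QuotientGroup.mk' N))
      fun x y hx hy hxy p h => hxy (hN hx hy (mul_right_cancel h))⟩

end SoficApprox

namespace Subgroup

variable {H : Type*} [Group H] (K : Subgroup H)

/-- The `K`-valued cocycle of the left action of `H` on `H ⧸ K`, relative to the transversal
`Quotient.out`: `g * out q = out (g • q) * quotientCocycle K g q`. -/
noncomputable def quotientCocycle (g : H) (q : H ⧸ K) : K :=
  ⟨(Quotient.out (g • q))⁻¹ * g * Quotient.out q, by
    rw [mul_assoc, ← QuotientGroup.eq, QuotientGroup.out_eq']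
    exact (MulAction.Quotient.mk_smul_out K g q).symm⟩

theorem quotientCocycle_mul (g h : H) (q : H ⧸ K) :
    quotientCocycle K (g * h) q = quotientCocycle K g (h • q) * quotientCocycle K h q := by
  ext
  simp only [quotientCocycle, Subgroup.coe_mul, mul_smul]
  group

theorem quotientCocycle_one (q : H ⧸ K) : quotientCocycle K 1 q = 1 := by
  ext
  simp [quotientCocycle]

theorem eq_of_smul_eq_of_quotientCocycle_eq {g h : H} {q : H ⧸ K} (hq : g • q = h • q)
    (hc : quotientCocycle K g q = quotientCocycle K h q) : g = h := by
  have := congrArg Subtype.val hc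
  simp only [quotientCocycle, hq, mul_left_inj, mul_right_inj] at this
  exact this

variable {Y : Type*}

noncomputable def inducedPerm (θ : K → Perm Y) (g : H) : Perm ((H ⧸ K) × Y) where
  toFun p := (g • p.1, θ (quotientCocycle K g p.1) p.2)
  invFun p := (g⁻¹ • p.1, (θ (quotientCocycle K g (g⁻¹ • p.1)))⁻¹ p.2)
  left_inv p := by simp
  right_inv p := by simp

@[simp]
theorem inducedPerm_apply (θ : K → Perm Y) (g : H) (q : H ⧸ K) (y : Y) :
    inducedPerm K θ g (q, y) = (g • q, θ (quotientCocycle K g q) y) :=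
  rfl

end Subgroup

open Subgroup in
theorem IsSoficApprox.inducedPerm {H : Type*} [Group H] [DecidableEq H] {K : Subgroup H}
    [Fintype (H ⧸ K)] [DecidableEq (H ⧸ K)] {Y : Type*} [Fintype Y] [DecidableEq Y]
    [Nonempty Y] {F : Finset H} {ε : ℝ} {θ : K → Perm Y}
    (hθ : IsSoficApprox (Finset.image₂ (quotientCocycle K) F Finset.univ) ε θ) :
    IsSoficApprox F ε (inducedPerm K θ) := by
  obtain ⟨hmul, hone, hsep⟩ := hθ
  have hmem : ∀ g ∈ F, ∀ q, quotientCocycle K g q ∈ Finset.image₂ (quotientCocycle K) F .univ :=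
    fun g hg q => Finset.mem_image₂_of_mem hg (Finset.mem_univ q)
  have : Nonempty (H ⧸ K) := ⟨QuotientGroup.mk 1⟩
  refine ⟨fun g h hg hh hgh => permDist_prod_lt fun q => ?_,
    fun h1 => permDist_prod_lt fun q => ?_, fun x y hx hy hxy => le_permDist_prod fun q => ?_⟩
  · have hc := hmul _ _ (hmem g hg (h • q)) (hmem h hh q)
      (quotientCocycle_mul K g h q ▸ hmem _ hgh q)
    simp only [Perm.mul_apply, inducedPerm_apply, mul_smul, quotientCocycle_mul,
      hammingDist_prodMk, if_true]
    rw [permDist_lt_iff, Perm.coe_mul, Function.comp_def] at hc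
    exact hc
  · have hc := hone (quotientCocycle_one K q ▸ hmem 1 h1 q)
    change (hammingDist (fun y => (1 • q, θ (quotientCocycle K 1 q) y))
      (fun y => (q, (1 : Perm Y) y)) : ℝ) < _
    rw [one_smul, quotientCocycle_one, hammingDist_prodMk, if_pos rfl]
    exact permDist_lt_iff.mp hc
  · simp only [inducedPerm_apply, hammingDist_prodMk]
    split_ifs with hq
    · exact le_permDist_iff.mp (hsep _ _ (hmem x hx q) (hmem y hy q)
        fun hc => hxy (eq_of_smul_eq_of_quotientCocycle_eq K hq hc))
    · have : (0 : ℝ) ≤ Fintype.card Y := by positivity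
      linarith

theorem IsSofic.of_finiteIndex {H : Type u} [Group H] (K : Subgroup H) [K.FiniteIndex]
    (hK : IsSofic K) : IsSofic H := by
  classical
  let := K.fintypeQuotientOfFiniteIndex
  refine isSofic_of_forall_exists_isSoficApprox fun F ε hε => ?_
  obtain ⟨n, hn, θ, hθ⟩ := isSofic_iff_isSoficApprox.mp hK _ ε hε
  have : Nonempty (Fin n) := ⟨⟨0, hn⟩⟩
  exact ⟨_, inferInstance, inferInstance, inferInstance, _, hθ.inducedPerm⟩

theorem IsLocallyGraded.of_injective {G H : Type*} [Group G] [Group H] (hG : IsLocallyGraded G)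
    (f : H →* G) (hf : Injective f) : IsLocallyGraded H := by
  classical
  rintro K hK ⟨S, hS⟩
  have hKf : K.map f ≠ ⊥ := by rwa [Ne, Subgroup.map_eq_bot_iff_of_injective K hf]
  have hfg : (K.map f).FG := ⟨S.image f, by rw [Finset.coe_image, ← MonoidHom.map_closure, hS]⟩
  obtain ⟨L, hL, hLfi⟩ := hG _ hKf hfg
  let e := K.equivMapOfInjective f hf
  refine ⟨L.comap e.toMonoidHom, fun htop => hL ?_, ⟨?_⟩⟩
  · rw [← Subgroup.map_comap_eq_self_of_surjective (f := e.toMonoidHom) e.surjective L, htop,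
      Subgroup.map_top_of_surjective _ e.surjective]
  · rw [Subgroup.index_comap_of_surjective _ e.surjective]
    exact hLfi.index_ne_zero

theorem IsLocallyGraded.noMinOrder {H : Type*} [Group H] [Group.FG H] (hlg : IsLocallyGraded H)
    (hrf : ¬ Group.ResiduallyFinite H) : NoMinOrder (FiniteIndexNormalSubgroup H) := by
  refine ⟨fun N => ?_⟩
  have hN : N.toSubgroup ≠ ⊥ := fun h => hrf <|
    Group.residuallyFinite_iff_exists_finiteIndexNormalSubgroup.mpr fun g hg =>
      ⟨N, by rwa [← FiniteIndexNormalSubgroup.mem_toSubgroup_iff, h, Subgroup.mem_bot]⟩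
  obtain ⟨L, hL, hLfi⟩ := hlg _ hN ((Group.fg_iff_subgroup_fg _).mp inferInstance)
  let L' := L.map N.toSubgroup.subtype
  have hlt : L' < N.toSubgroup := by
    have := Subgroup.map_subtype_lt_map_subtype.mpr (lt_top_iff_ne_top.mpr hL)
    rwa [← MonoidHom.range_eq_map, Subgroup.range_subtype] at this
  have : L'.FiniteIndex := ⟨by
    rw [Subgroup.index_map_subtype]
    exact mul_ne_zero hLfi.index_ne_zero Subgroup.FiniteIndex.index_ne_zero⟩
  exact ⟨.ofSubgroup L'.normalCore, L'.normalCore_le.trans_lt hlt⟩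

theorem Group.FG.countable (H : Type*) [Group H] [Group.FG H] : Countable H := by
  obtain ⟨α, _, φ, hφ⟩ := Group.fg_iff_exists_freeGroup_hom_surjective_finite.mp ‹Group.FG H›
  exact hφ.countable

instance FiniteIndexNormalSubgroup.countable_of_fg {H : Type*} [Group H] [Group.FG H] :
    Countable (FiniteIndexNormalSubgroup H) := by
  have := Group.FG.countable H
  choose S hS using fun N : FiniteIndexNormalSubgroup H =>
    (Group.fg_iff_subgroup_fg N.toSubgroup).mp inferInstance
  refine Function.Injective.countable (f := S) fun N N' h => toSubgroup_injective ?_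
  simp only [← hS, h]

theorem exists_strictAnti_forall_le {α : Type*} [SemilatticeInf α] [NoMinOrder α] (a : α)
    (M : ℕ → α) : ∃ C : ℕ → α, C 0 = a ∧ StrictAnti C ∧ ∀ j, C (j + 1) ≤ M j := by
  choose below hbelow using fun b : α => exists_lt b
  exact ⟨fun i => Nat.rec a (fun j c => below c ⊓ M j) i, rfl,
    strictAnti_nat_of_succ_lt fun j => inf_le_left.trans_lt (hbelow _), fun j => inf_le_right⟩

/-- A locally graded non-sofic group contains a finitely generated non-sofic subgroup `H`
with a strictly decreasing chain `H = N 0 > N 1 > ⋯` of finitely generated normal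
subgroups, each non-sofic, whose intersection `R` is nontrivial, lies in the profinite
residual of `H`, and such that `H/R` is residually finite (stated elementwise: every
element of `H` outside `R` avoids a finite-index normal subgroup of `H` containing `R`). -/
theorem locallyGraded_nonSofic_chain (G : Type*) [Group G]
    (hlg : IsLocallyGraded G) (hG : ¬ IsSofic G) :
    ∃ H : Subgroup G, H.FG ∧ ¬ IsSofic H ∧
      ∃ N : ℕ → Subgroup H,
        N 0 = ⊤ ∧ StrictAnti N ∧
        (∀ i, (N i).Normal ∧ (N i).FG ∧ ¬ IsSofic (N i)) ∧
        (⨅ i, N i) ≠ ⊥ ∧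
        ((⨅ i, N i) ≤ ⨅ (K : Subgroup H) (_ : K.Normal) (_ : K.FiniteIndex), K) ∧
        (∀ h : H, h ∉ (⨅ i, N i) →
          ∃ K : Subgroup H, K.Normal ∧ K.FiniteIndex ∧ (⨅ i, N i) ≤ K ∧ h ∉ K) := by
  obtain ⟨H, hHfg, hH⟩ : ∃ H : Subgroup G, H.FG ∧ ¬ IsSofic H := by
    by_contra! h
    exact hG (IsSofic.of_forall_fg h)
  have := (Group.fg_iff_subgroup_fg H).mpr hHfg
  have hrf : ¬ Group.ResiduallyFinite H := fun _ => hH IsSofic.of_residuallyFinite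
  have := (hlg.of_injective H.subtype H.subtype_injective).noMinOrder hrf
  let top : FiniteIndexNormalSubgroup H := .ofSubgroup ⊤
  have : Nonempty (FiniteIndexNormalSubgroup H) := ⟨top⟩
  obtain ⟨M, hM⟩ := exists_surjective_nat (FiniteIndexNormalSubgroup H)
  obtain ⟨C, hC0, hC, hCM⟩ := exists_strictAnti_forall_le top M
  have hsep : ∀ h : H, h ∉ ⨅ i, (C i).toSubgroup → ∃ i, h ∉ (C i).toSubgroup := fun h hh => by
    simpa [Subgroup.mem_iInf] using hh
  refine ⟨H, hHfg, hH, fun i => (C i).toSubgroup, congrArg _ hC0, fun i j h => hC h,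
    fun i => ⟨inferInstance, (Group.fg_iff_subgroup_fg _).mp inferInstance,
      fun hs => hH (hs.of_finiteIndex _)⟩, fun hbot => hrf ?_, ?_, fun h hh => ?_⟩
  · refine Group.residuallyFinite_iff_exists_finiteIndexNormalSubgroup.mpr fun g hg => ?_
    obtain ⟨i, hi⟩ := hsep g (by rwa [hbot, Subgroup.mem_bot])
    exact ⟨C i, hi⟩
  · refine le_iInf₂ fun K hK => le_iInf fun hKfi => ?_
    obtain ⟨j, hj⟩ := hM (.ofSubgroup K)
    exact (iInf_le _ (j + 1)).trans (hj ▸ hCM j : C (j + 1) ≤ .ofSubgroup K)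
  · obtain ⟨i, hi⟩ := hsep h hh
    exact ⟨C i, inferInstance, inferInstance, iInf_le _ i, hi⟩
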